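/- Let g ∈ ℂ^N be a window with V_g g(λ) ≠ 0 for all λ ∈ (ℤ_N)². Then any x ∈ ℂ^N is determined by |V_g x| up to a global phase: if |V_g x| = |V_g y| pointwise on (ℤ_N)², then y = c x for some c ∈ ℂ with |c| = 1. -/

import Mathlib

open scoped Real ComplexConjugate BigOperators

/-- The character `m ↦ e^{2πi m/N}` on `ℤ_N`. -/
noncomputable def zchar (N : ℕ) [NeZero N] (m : ZMod N) : ℂ :=
  Complex.exp (2 * π * Complex.I * (m.val : ℝ) / N)

/-- Circular translation `(T_k x)_j = x_{j-k}` on `ℂ^N`. -/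
def tshift {N : ℕ} [NeZero N] (k : ZMod N) (x : ZMod N → ℂ) : ZMod N → ℂ :=
  fun j => x (j - k)

/-- Modulation `(M_l x)_j = e^{2πi jl/N} x_j` on `ℂ^N`. -/
noncomputable def mshift {N : ℕ} [NeZero N] (l : ZMod N) (x : ZMod N → ℂ) : ZMod N → ℂ :=
  fun j => zchar N (j * l) * x j

/-- Time-frequency shift `π(k,l) = M_l T_k`. -/
noncomputable def tfshift {N : ℕ} [NeZero N] (p : ZMod N × ZMod N)
    (x : ZMod N → ℂ) : ZMod N → ℂ :=
  mshift p.2 (tshift p.1 x)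

/-- The discrete short-time Fourier transform `V_g x(λ) = ⟨x, π(λ)g⟩`. -/
noncomputable def dstft {N : ℕ} [NeZero N] (g x : ZMod N → ℂ)
    (p : ZMod N × ZMod N) : ℂ :=
  ∑ n : ZMod N, x n * conj (tfshift p g n)

/-!
The Fourier transform in both variables of the spectrogram `|V_g x|²` is `N · V_x x · conj V_g g`,
so `|V_g x| = |V_g y|` and `V_g g ≠ 0` everywhere force `V_x x = V_y y`. For fixed `u`,
`V_x x (u, ·)` is the DFT of `m ↦ x m * conj (x (m - u))`, so Fourier inversion recovers the
rank-one matrix `x m * conj (x n)`, which determines `x` up to a unimodular factor.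
-/

open Finset ZMod

namespace ZMod

variable {N : ℕ} [NeZero N]

lemma dft_conj_apply_neg (Φ : ZMod N → ℂ) (k : ZMod N) :
    𝓕 (fun j => conj (Φ j)) (-k) = conj (𝓕 Φ k) := by
  simp only [dft_apply, smul_eq_mul, map_sum, map_mul, mul_neg, neg_neg]
  simp_rw [← AddChar.map_neg_eq_conj, neg_neg]

lemma dft_correlation (A B : ZMod N → ℂ) (k : ZMod N) :
    𝓕 (fun j => ∑ m, A m * B (m - j)) k = 𝓕 A k * 𝓕 B (-k) := by
  simp only [dft_apply, smul_eq_mul, sum_mul_sum]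
  simp_rw [mul_sum]
  rw [sum_comm]
  refine sum_congr rfl fun m _ => ?_
  rw [← Equiv.sum_comp (Equiv.subLeft m)]
  refine sum_congr rfl fun j _ => ?_
  rw [Equiv.subLeft_apply, sub_sub_cancel,
    show -((m - j) * k) = -(m * k) + -(j * -k) by ring, AddChar.map_add_eq_mul]
  ring

lemma dft_norm_sq_dft (Φ : ZMod N → ℂ) (u : ZMod N) :
    𝓕 (fun l => (‖𝓕 Φ l‖ ^ 2 : ℂ)) (-u) = N * ∑ m, Φ m * conj (Φ (m - u)) := by
  have hsq : ∀ l, (‖𝓕 Φ l‖ ^ 2 : ℂ) =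
      ∑ m, ∑ n, Φ m * conj (Φ n) * stdAddChar (l * (n - m)) := fun l => by
    rw [← Complex.mul_conj', dft_apply, map_sum, sum_mul_sum]
    refine sum_congr rfl fun m _ => sum_congr rfl fun n _ => ?_
    rw [smul_eq_mul, smul_eq_mul, map_mul, ← AddChar.map_neg_eq_conj,
      show l * (n - m) = -(m * l) + -(-(n * l)) by ring, AddChar.map_add_eq_mul]
    ring
  have horth : ∀ m n,
      ∑ l, stdAddChar (-(l * -u)) * (Φ m * conj (Φ n) * stdAddChar (l * (n - m))) =
        if n = m - u then N * (Φ m * conj (Φ n)) else 0 := fun m n => by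
    have hcond : n - m + u = 0 ↔ n = m - u := by
      constructor <;> intro h <;> linear_combination h
    calc ∑ l, stdAddChar (-(l * -u)) * (Φ m * conj (Φ n) * stdAddChar (l * (n - m)))
        = Φ m * conj (Φ n) * ∑ l, stdAddChar (l * (n - m + u)) := by
          rw [mul_sum]
          refine sum_congr rfl fun l _ => ?_
          rw [show l * (n - m + u) = -(l * -u) + l * (n - m) by ring, AddChar.map_add_eq_mul]
          ring
      _ = _ := by
          rw [AddChar.sum_mulShift _ (isPrimitive_stdAddChar N), ZMod.card]
          simp only [hcond]
          split_ifs <;> ring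
  rw [dft_apply, mul_sum]
  simp_rw [hsq, smul_eq_mul, mul_sum]
  rw [sum_comm]
  refine sum_congr rfl fun m _ => ?_
  rw [sum_comm]
  simp_rw [horth]
  rw [sum_ite_eq']
  simp

end ZMod

section

variable {N : ℕ} [NeZero N]

lemma zchar_eq_stdAddChar (m : ZMod N) : zchar N m = stdAddChar m := by
  rw [zchar, stdAddChar_apply, toCircle_apply]
  push_cast
  rfl

lemma dstft_apply_eq_dft (g x : ZMod N → ℂ) (k l : ZMod N) :
    dstft g x (k, l) = 𝓕 (fun n => x n * conj (g (n - k))) l := by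
  refine sum_congr rfl fun n _ => ?_
  rw [tfshift, mshift, tshift, zchar_eq_stdAddChar, smul_eq_mul, map_mul,
    ← AddChar.map_neg_eq_conj]
  ring

lemma dft_dft_norm_sq_dstft (g x : ZMod N → ℂ) (u v : ZMod N) :
    𝓕 (fun k => 𝓕 (fun l => (‖dstft g x (k, l)‖ ^ 2 : ℂ)) (-u)) v =
      N * dstft x x (u, v) * conj (dstft g g (u, v)) := by
  have hk : (fun k => 𝓕 (fun l => (‖dstft g x (k, l)‖ ^ 2 : ℂ)) (-u)) = fun k =>
      N * ∑ m, x m * conj (x (m - u)) * (conj (g (m - k)) * g (m - k - u)) := by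
    ext k
    simp_rw [dstft_apply_eq_dft, dft_norm_sq_dft, map_mul, Complex.conj_conj,
      sub_right_comm _ u k]
    exact congrArg _ (sum_congr rfl fun m _ => by ring)
  have hcorr := dft_correlation (fun m => x m * conj (x (m - u)))
    (fun j => conj (g j) * g (j - u)) v
  rw [hk, dft_const_mul]
  beta_reduce
  rw [hcorr, dstft_apply_eq_dft, dstft_apply_eq_dft, ← dft_conj_apply_neg]
  simp only [map_mul, Complex.conj_conj]
  ring

lemma dstft_self_eq_of_norm_dstft_eq {g x y : ZMod N → ℂ} (hg : ∀ p, dstft g g p ≠ 0)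
    (hxy : ∀ p, ‖dstft g x p‖ = ‖dstft g y p‖) : dstft x x = dstft y y := by
  ext ⟨u, v⟩
  have h := dft_dft_norm_sq_dstft g x u v
  simp only [hxy, dft_dft_norm_sq_dstft] at h
  rwa [mul_left_inj' ((map_ne_zero _).2 (hg (u, v))),
    mul_right_inj' (Nat.cast_ne_zero.2 (NeZero.ne N)), eq_comm] at h

lemma mul_conj_eq_of_dstft_self_eq {x y : ZMod N → ℂ} (h : dstft x x = dstft y y)
    (m n : ZMod N) : x m * conj (x n) = y m * conj (y n) := by
  have hdft : 𝓕 (fun j => x j * conj (x (j - (m - n)))) =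
      𝓕 (fun j => y j * conj (y (j - (m - n)))) :=
    funext fun v => by rw [← dstft_apply_eq_dft, ← dstft_apply_eq_dft, h]
  simpa using congrFun (dft.injective hdft) m

end

theorem RCLike.exists_norm_eq_one_of_mul_conj_eq {𝕜 ι : Type*} [RCLike 𝕜] {x y : ι → 𝕜}
    (h : ∀ m n, x m * conj (x n) = y m * conj (y n)) :
    ∃ c : 𝕜, ‖c‖ = 1 ∧ y = fun j => c * x j := by
  by_cases hx : x = 0
  · refine ⟨1, norm_one, funext fun j => ?_⟩
    have hyj : y j * conj (y j) = 0 := by simpa [hx] using (h j j).symm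
    simpa [hx, RCLike.mul_conj] using hyj
  obtain ⟨n, hn⟩ := Function.ne_iff.1 hx
  have hnorm : ‖x n‖ = ‖y n‖ := by
    have hsq : (‖x n‖ : 𝕜) ^ 2 = (‖y n‖ : 𝕜) ^ 2 := by
      simpa only [RCLike.mul_conj] using h n n
    exact (sq_eq_sq₀ (norm_nonneg _) (norm_nonneg _)).1 (by exact_mod_cast hsq)
  have hyn : y n ≠ 0 := norm_ne_zero_iff.1 (hnorm ▸ norm_ne_zero_iff.2 hn)
  refine ⟨y n / x n, by rw [norm_div, hnorm, div_self (norm_ne_zero_iff.2 hyn)],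
    funext fun j => ?_⟩
  rw [div_mul_eq_mul_div, eq_div_iff hn]
  refine mul_right_cancel₀ ((map_ne_zero (starRingEnd 𝕜)).2 hn) ?_
  linear_combination y j * h n n - y n * h j n

/-- If the window `g` satisfies `V_g g(λ) ≠ 0` for all `λ ∈ (ℤ_N)²`, then every
`x ∈ ℂ^N` is determined by `|V_g x|` up to a global phase factor. -/
theorem dstft_phase_retrieval {N : ℕ} [NeZero N] (g x y : ZMod N → ℂ)
    (hg : ∀ p : ZMod N × ZMod N, dstft g g p ≠ 0)
    (hxy : ∀ p : ZMod N × ZMod N, ‖dstft g x p‖ = ‖dstft g y p‖) :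
    ∃ c : ℂ, ‖c‖ = 1 ∧ y = fun j => c * x j :=
  RCLike.exists_norm_eq_one_of_mul_conj_eq
    (mul_conj_eq_of_dstft_self_eq (dstft_self_eq_of_norm_dstft_eq hg hxy))
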